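/- arXiv:2008.06127 — 3 statements merged into one kernel-verified Lean document; each statement's English description precedes it below -/
import Mathlib

section
/- For positive integers a_1, ..., a_n, if [2a_1, ..., 2a_n]^+ = p/q in lowest terms with p, q > 0, then exactly one of p and q is even. -/
/-!
The property "exactly one of `q.num`, `q.den` is even" is preserved by `q ↦ q⁻¹`, which swaps
numerator and denominator up to sign (and fixes `0`), and by adding an even integer `n`, which keeps
the denominator and changes the numerator by `n * q.den`. Since
`[2a₁, …, 2aₙ]⁺ = ([2a₂, …, 2aₙ]⁺)⁻¹ + 2a₁` and `0` has the property, induction on the list gives it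
for every even continued fraction.
-/

/-- The even continued fraction `[2a₁, 2a₂, …, 2aₙ]⁺`. -/
def ecf : List ℕ → ℚ
  | [] => 0
  | a :: l => 2 * a + 1 / ecf l

namespace Rat

theorem even_inv_num_iff {q : ℚ} (hq : q ≠ 0) : Even q⁻¹.num ↔ Even (q.den : ℤ) := by
  rw [num_inv, ← Int.natAbs_even, Int.natAbs_mul, Int.natAbs_sign_of_ne_zero (num_ne_zero.mpr hq),
    one_mul, Int.natAbs_natCast, Int.even_coe_nat]

theorem even_inv_den_iff {q : ℚ} (hq : q ≠ 0) : Even (q⁻¹.den : ℤ) ↔ Even q.num := by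
  rw [den_inv_of_ne_zero hq, Int.even_coe_nat, Int.natAbs_even]

theorem add_intCast_num (q : ℚ) (n : ℤ) : (q + n).num = q.num + n * q.den := by
  have h : ((q + n).num : ℚ) = q.num + n * q.den := by
    rw [← mul_den_eq_num, add_intCast_den, add_mul, mul_den_eq_num]
  exact_mod_cast h

theorem xor_even_num_den_inv {q : ℚ} (h : Xor (Even q.num) (Even (q.den : ℤ))) :
    Xor (Even q⁻¹.num) (Even (q⁻¹.den : ℤ)) := by
  rcases eq_or_ne q 0 with rfl | hq
  · simp
  · rw [even_inv_num_iff hq, even_inv_den_iff hq]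
    exact _root_.xor_comm _ _ ▸ h

theorem xor_even_num_den_add_intCast {q : ℚ} {n : ℤ} (hn : Even n)
    (h : Xor (Even q.num) (Even (q.den : ℤ))) :
    Xor (Even (q + n).num) (Even ((q + n).den : ℤ)) := by
  have hnum : Even (q + n).num ↔ Even q.num := by
    rw [add_intCast_num, Int.even_add, iff_true_right (hn.mul_right _)]
  rwa [hnum, add_intCast_den]

end Rat

theorem ecf_cons (a : ℕ) (l : List ℕ) : ecf (a :: l) = (ecf l)⁻¹ + ((2 * a : ℤ) : ℚ) := by
  rw [ecf, one_div, add_comm]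
  push_cast
  rfl

theorem stmt_1_general (l : List ℕ) :
    Xor' (Even (ecf l).num) (Even ((ecf l).den : ℤ)) := by
  show Xor _ _
  induction l with
  | nil => simp [ecf]
  | cons a l ih =>
    rw [ecf_cons]
    exact Rat.xor_even_num_den_add_intCast (even_two_mul _) (Rat.xor_even_num_den_inv ih)

/-- For positive integers `a₁, …, aₙ`, if `[2a₁, …, 2aₙ]⁺ = p/q` in lowest terms with
`p, q > 0`, then exactly one of `p` and `q` is even. -/
theorem stmt_1 (l : List ℕ) (hne : l ≠ []) (hpos : ∀ a ∈ l, 1 ≤ a) :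
    Xor' (Even (ecf l).num) (Even ((ecf l).den : ℤ)) :=
  stmt_1_general l
end

section
/- Every rational number p/q with p > q > 0 coprime and exactly one of p, q even admits a (unique) even continued fraction expansion p/q = [2a_1, 2a_2, ..., 2a_n]^+ with all a_i nonzero integers. -/
/-!
Since all coefficients are nonzero, `|[2a₁, …, 2aₙ]⁺| > 1` by induction, so the tail
`1 / [2a₂, …, 2aₙ]⁺` has absolute value `< 1` and `2a₁` is the only even integer within distance
`< 1` of the value; this gives uniqueness. For existence divide with an even quotient and a
centred remainder, `p = 2qa + r` with `-q ≤ r < q`, and recurse on `q / r`: coprimality rules out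
`r ∈ {0, -q}` while `q > 1`, and parity is preserved, so at `q = 1` the numerator is even.
-/

/-- The even continued fraction `[2a₁, 2a₂, …, 2aₙ]⁺` with integer coefficients. -/
def ecfZ : List ℤ → ℚ
  | [] => 0
  | a :: l => 2 * a + 1 / ecfZ l

-- With `1 / 0 = 0` this makes `ecfZ [a] = 2 * a`, as the paper's `[2a]⁺ = 2a` requires.
@[simp]
lemma ecfZ_nil : ecfZ [] = 0 := rfl

@[simp]
lemma ecfZ_cons (a : ℤ) (l : List ℤ) : ecfZ (a :: l) = 2 * a + 1 / ecfZ l := rfl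

lemma one_lt_abs_two_mul_add {a : ℤ} {t : ℚ} (ha : a ≠ 0) (ht : |t| < 1) :
    1 < |2 * (a : ℚ) + t| := by
  have h2a : 2 ≤ |2 * (a : ℚ)| := by
    have : (1 : ℚ) ≤ |(a : ℚ)| := by exact_mod_cast Int.one_le_abs ha
    rw [abs_mul, abs_two]
    linarith
  linarith [abs_sub_abs_le_abs_add (2 * (a : ℚ)) t]

lemma abs_one_div_ecfZ_lt_one : ∀ {l : List ℤ}, (∀ a ∈ l, a ≠ 0) → |1 / ecfZ l| < 1
  | [], _ => by simp
  | a :: l, hl => by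
    obtain ⟨ha, hl⟩ := List.forall_mem_cons.1 hl
    have h := one_lt_abs_two_mul_add ha (abs_one_div_ecfZ_lt_one hl)
    rw [ecfZ_cons, abs_one_div]
    exact (div_lt_one (by linarith)).2 h

lemma one_lt_abs_ecfZ_cons {a : ℤ} {l : List ℤ} (ha : a ≠ 0) (hl : ∀ b ∈ l, b ≠ 0) :
    1 < |ecfZ (a :: l)| :=
  one_lt_abs_two_mul_add ha (abs_one_div_ecfZ_lt_one hl)

lemma eq_of_two_mul_add_eq {a b : ℤ} {s t : ℚ} (hs : |s| < 1) (ht : |t| < 1)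
    (h : 2 * (a : ℚ) + s = 2 * b + t) : a = b := by
  have hab : |((a - b : ℤ) : ℚ)| < 1 := by
    rw [abs_lt] at *
    push_cast
    constructor <;> linarith
  exact sub_eq_zero.1 (Int.abs_lt_one_iff.1 (by exact_mod_cast hab))

lemma ecfZ_injOn : Set.InjOn ecfZ {l | ∀ a ∈ l, a ≠ 0}
  | [], _, [], _, _ => rfl
  | [], _, b :: m, hm, h => by
    obtain ⟨hb, hm⟩ := List.forall_mem_cons.1 hm
    have := one_lt_abs_ecfZ_cons hb hm
    rw [← h, ecfZ_nil, abs_zero] at this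
    exact absurd this (by norm_num)
  | a :: l, hl, [], _, h => by
    obtain ⟨ha, hl⟩ := List.forall_mem_cons.1 hl
    have := one_lt_abs_ecfZ_cons ha hl
    rw [h, ecfZ_nil, abs_zero] at this
    exact absurd this (by norm_num)
  | a :: l, hl, b :: m, hm, h => by
    obtain ⟨-, hl'⟩ := List.forall_mem_cons.1 hl
    obtain ⟨-, hm'⟩ := List.forall_mem_cons.1 hm
    rw [ecfZ_cons, ecfZ_cons] at h
    obtain rfl := eq_of_two_mul_add_eq (abs_one_div_ecfZ_lt_one hl') (abs_one_div_ecfZ_lt_one hm') h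
    have htail : ecfZ l = ecfZ m := by simpa using h
    rw [ecfZ_injOn hl' hm' htail]

lemma exists_eq_two_mul_mul_add {q : ℤ} (hq : 0 < q) (p : ℤ) :
    ∃ a r, p = 2 * q * a + r ∧ -q ≤ r ∧ r < q :=
  ⟨(p + q) / (2 * q), (p + q) % (2 * q) - q,
    by linarith [Int.mul_ediv_add_emod (p + q) (2 * q)],
    by linarith [Int.emod_nonneg (p + q) (by positivity : 2 * q ≠ 0)],
    by linarith [Int.emod_lt_of_pos (p + q) (by positivity : 0 < 2 * q)]⟩

lemma ne_zero_and_neg_lt_of_isCoprime {q r : ℤ} (hq : 1 < q) (hcop : IsCoprime q r)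
    (hr : -q ≤ r) : r ≠ 0 ∧ -q < r := by
  refine ⟨?_, hr.lt_of_ne ?_⟩
  · rintro rfl
    rw [isCoprime_zero_right, Int.isUnit_iff] at hcop
    omega
  · rintro rfl
    rw [IsCoprime.neg_right_iff, isCoprime_self, Int.isUnit_iff] at hcop
    omega

theorem exists_ecfZ_eq_div (p q : ℤ) (hq : 0 < q) (hpq : q < |p|) (hcop : IsCoprime p q)
    (hpar : Xor (Even p) (Even q)) :
    ∃ l : List ℤ, l ≠ [] ∧ (∀ a ∈ l, a ≠ 0) ∧ ecfZ l = p / q := by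
  obtain ⟨a, r, rfl, hrl, hrq⟩ := exists_eq_two_mul_mul_add hq p
  have hpar : Xor (Even q) (Even r) := by
    have : Even (2 * q * a + r) ↔ Even r := by simp [Int.even_add, mul_assoc]
    rwa [this, xor_comm] at hpar
  rcases (show 1 ≤ q by omega).eq_or_lt with rfl | hq1
  · obtain rfl : r = 0 := by
      obtain ⟨k, rfl⟩ : Even r := by simpa [Xor] using hpar
      omega
    refine ⟨[a], List.cons_ne_nil _ _, ?_, by simp⟩
    simp only [List.mem_singleton, forall_eq]
    rintro rfl
    norm_num at hpq
  have hcop : IsCoprime q r := by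
    have := hcop.symm.add_mul_left_right (-(2 * a))
    rwa [show 2 * q * a + r + q * -(2 * a) = r by ring] at this
  obtain ⟨hr0, hrq'⟩ := ne_zero_and_neg_lt_of_isCoprime hq1 hcop hrl
  have ha : a ≠ 0 := by
    rintro rfl
    rw [mul_zero, zero_add, lt_abs] at hpq
    omega
  obtain ⟨l, hl, hl0, hlv⟩ : ∃ l : List ℤ, l ≠ [] ∧ (∀ b ∈ l, b ≠ 0) ∧ ecfZ l = q / r := by
    rcases hr0.lt_or_gt with hr | hr
    · obtain ⟨l, hl, hl0, hlv⟩ := exists_ecfZ_eq_div (-q) (-r) (by omega)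
        (by rw [abs_neg, abs_of_pos hq]; omega) hcop.neg_neg (by simpa only [even_neg] using hpar)
      exact ⟨l, hl, hl0, by rw [hlv]; push_cast; exact neg_div_neg_eq _ _⟩
    · exact exists_ecfZ_eq_div q r hr (by rwa [abs_of_pos hq]) hcop hpar
  refine ⟨a :: l, List.cons_ne_nil _ _, List.forall_mem_cons.2 ⟨ha, hl0⟩, ?_⟩
  have hr : (r : ℚ) ≠ 0 := by exact_mod_cast hr0
  have hq : (q : ℚ) ≠ 0 := by exact_mod_cast hq.ne'
  rw [ecfZ_cons, hlv]
  push_cast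
  field_simp
termination_by q.natAbs
decreasing_by all_goals omega

/-- Every rational `p/q` with `p > q > 0` coprime and exactly one of `p, q` even admits a
unique even continued fraction expansion `p/q = [2a₁, …, 2aₙ]⁺` with all `aᵢ` nonzero
integers. -/
theorem stmt_4 (p q : ℤ) (hq : 0 < q) (hpq : q < p) (hcop : Int.gcd p q = 1)
    (hparity : Xor' (Even p) (Even q)) :
    ∃! l : List ℤ, l ≠ [] ∧ (∀ a ∈ l, a ≠ 0) ∧ ecfZ l = (p : ℚ) / (q : ℚ) := by
  obtain ⟨l, hl, hl0, hlv⟩ := exists_ecfZ_eq_div p q hq (by rwa [abs_of_pos (hq.trans hpq)])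
    (Int.isCoprime_iff_gcd_eq_one.2 hcop) hparity
  exact ⟨l, ⟨hl, hl0, hlv⟩, fun m ⟨_, hm0, hmv⟩ => ecfZ_injOn hm0 hl0 (hmv.trans hlv.symm)⟩
end

section
/- If a real polynomial p(t) of even degree 2d satisfies t^{2d} p(1/t) = p(t) (palindromic) and all roots of p are real and positive, then the roots come in pairs r, 1/r, and for every ω on the unit circle with ω ≠ ±1 the value ω^{-d} p(ω) is real and nonzero of constant sign; in particular p has no roots on the unit circle other than possibly ±1, and if p(1) ≠ 0 and p(-1) ≠ 0 then p has no unit-circle roots at all. -/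
/-!
Palindromy, `p = t^{2d} p(1/t)`, pairs the roots as `r, 1/r` and makes `ω⁻ᵈ p(ω)` invariant
under complex conjugation when `|ω| = 1`, so it is real there. Since every root of `p` is a
positive real, the only possible root on the unit circle is `1`. The real continuous function
`ω ↦ ω⁻ᵈ p(ω)` therefore has no zero on the connected arc `{|ω| = 1} \ {1}`, and so keeps the
sign it has at `ω = -1`.
-/

open Polynomial

theorem Real.sign_eq_sign_of_isPreconnected {α : Type*} [TopologicalSpace α] {s : Set α}
    (hs : IsPreconnected s) {f : α → ℝ} (hf : ContinuousOn f s) (hf0 : ∀ x ∈ s, f x ≠ 0)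
    {x y : α} (hx : x ∈ s) (hy : y ∈ s) : Real.sign (f x) = Real.sign (f y) := by
  have hxy := (hs.image f hf).Icc_subset (Set.mem_image_of_mem f hx) (Set.mem_image_of_mem f hy)
  have hyx := (hs.image f hf).Icc_subset (Set.mem_image_of_mem f hy) (Set.mem_image_of_mem f hx)
  have h0 : (0 : ℝ) ∉ f '' s := fun ⟨z, hz, hz0⟩ => hf0 z hz hz0
  rcases (hf0 x hx).lt_or_gt with hfx | hfx <;> rcases (hf0 y hy).lt_or_gt with hfy | hfy
  · rw [Real.sign_of_neg hfx, Real.sign_of_neg hfy]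
  · exact absurd (hxy ⟨hfx.le, hfy.le⟩) h0
  · exact absurd (hyx ⟨hfy.le, hfx.le⟩) h0
  · rw [Real.sign_of_pos hfx, Real.sign_of_pos hfy]

namespace Complex

theorem isPreconnected_sphere_diff_one : IsPreconnected (Metric.sphere (0 : ℂ) 1 \ {1}) := by
  suffices h : (fun t : ℝ => -exp (t * I)) '' Set.Ioo (-Real.pi) Real.pi =
      Metric.sphere (0 : ℂ) 1 \ {1} from
    h ▸ isPreconnected_Ioo.image _ (by fun_prop)
  ext ω
  simp only [Set.mem_image, Set.mem_sdiff, mem_sphere_zero_iff_norm, Set.mem_singleton_iff]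
  constructor
  · rintro ⟨t, ⟨ht₁, ht₂⟩, rfl⟩
    refine ⟨by rw [norm_neg, norm_exp_ofReal_mul_I], fun h => ht₂.ne ?_⟩
    have harg := arg_cos_add_sin_mul_I (θ := t) ⟨ht₁, ht₂.le⟩
    rwa [← exp_mul_I, neg_eq_iff_eq_neg.mp h, arg_neg_one, eq_comm] at harg
  · rintro ⟨hω, hω1⟩
    have hexp : exp (arg (-ω) * I) = -ω := by
      simpa [norm_neg, hω] using norm_mul_exp_arg_mul_I (-ω)
    refine ⟨arg (-ω), ⟨neg_pi_lt_arg _, (arg_le_pi _).lt_of_ne fun h => hω1 ?_⟩, by simp [hexp]⟩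
    rw [← neg_neg ω, ← hexp, h]
    simp

theorem eq_one_of_isRoot_of_norm_eq_one {q : ℂ[X]}
    (hroots : ∀ z : ℂ, q.IsRoot z → ∃ x : ℝ, 0 < x ∧ z = x) {ω : ℂ} (hω : ‖ω‖ = 1)
    (h : q.IsRoot ω) : ω = 1 := by
  obtain ⟨x, hx, rfl⟩ := hroots ω h
  rw [norm_real, Real.norm_of_nonneg hx.le] at hω
  rw [hω, ofReal_one]

end Complex

namespace Polynomial

theorem reflect_eq_self_of_coeff_eq {R : Type*} [Semiring R] {n : ℕ} {p : R[X]}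
    (hpal : ∀ k ≤ n, p.coeff k = p.coeff (n - k)) : p.reflect n = p := by
  ext i
  rw [coeff_reflect]
  rcases le_or_gt i n with hi | hi
  · rw [revAt_le hi, hpal i hi]
  · rw [revAt_eq_self_of_lt hi]

section Field

variable {K : Type*} [Field K] {n : ℕ} {p : K[X]}

theorem eval_eq_pow_mul_eval_inv_of_reflect_eq_self (hdeg : p.natDegree ≤ n)
    (hp : p.reflect n = p) {z : K} (hz : z ≠ 0) : p.eval z = z ^ n * p.eval z⁻¹ := by
  let := invertibleOfNonzero (inv_ne_zero hz)
  have h := eval₂_reflect_mul_pow (RingHom.id K) z⁻¹ n p hdeg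
  rw [hp, invOf_eq_inv, inv_inv, eval₂_id, eval₂_id] at h
  rw [← h, mul_left_comm, ← mul_pow, mul_inv_cancel₀ hz, one_pow, mul_one]

/-- For `r = 0` the conclusion holds because `0⁻¹ = 0`. -/
theorem IsRoot.inv_of_reflect_eq_self (hdeg : p.natDegree ≤ n) (hp : p.reflect n = p) {r : K}
    (hr : p.IsRoot r) : p.IsRoot r⁻¹ := by
  rcases eq_or_ne r 0 with rfl | hr0
  · rwa [inv_zero]
  rw [IsRoot, eval_eq_pow_mul_eval_inv_of_reflect_eq_self hdeg hp (inv_ne_zero hr0), inv_inv,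
    hr.eq_zero, mul_zero]

end Field

theorem aeval_eq_pow_mul_aeval_inv_of_reflect_eq_self {p : ℝ[X]} {n : ℕ}
    (hdeg : p.natDegree ≤ n) (hp : p.reflect n = p) {z : ℂ} (hz : z ≠ 0) :
    aeval z p = z ^ n * aeval z⁻¹ p := by
  simp only [← eval_map_algebraMap]
  exact eval_eq_pow_mul_eval_inv_of_reflect_eq_self (natDegree_map_le.trans hdeg)
    (by rw [reflect_map, hp]) hz

end Polynomial

section Symmetrized

open Complex ComplexConjugate

/-- The paper's `ω⁻ᵈ p(ω)`, as a real number (its real part): on the unit circle it is real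
when `p` is palindromic of degree `2d`. -/
noncomputable def symmetrizedEval (p : ℝ[X]) (d : ℕ) (ω : ℂ) : ℝ :=
  (ω⁻¹ ^ d * aeval ω p).re

variable {p : ℝ[X]} {d : ℕ}

theorem ofReal_symmetrizedEval (hdeg : p.natDegree ≤ 2 * d) (hp : p.reflect (2 * d) = p)
    {ω : ℂ} (hω : ‖ω‖ = 1) : (symmetrizedEval p d ω : ℂ) = ω⁻¹ ^ d * aeval ω p := by
  have hω0 : ω ≠ 0 := norm_ne_zero_iff.mp (hω ▸ one_ne_zero)
  refine conj_eq_iff_re.mp ?_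
  rw [map_mul, map_pow, map_inv₀, ← aeval_conj, ← inv_eq_conj hω, inv_inv,
    aeval_eq_pow_mul_aeval_inv_of_reflect_eq_self hdeg hp hω0, two_mul, pow_add, inv_pow,
    ← mul_assoc, inv_mul_cancel_left₀ (pow_ne_zero d hω0)]

theorem aeval_eq_pow_mul_symmetrizedEval (hdeg : p.natDegree ≤ 2 * d)
    (hp : p.reflect (2 * d) = p) {ω : ℂ} (hω : ‖ω‖ = 1) :
    aeval ω p = ω ^ d * symmetrizedEval p d ω := by
  have hω0 : ω ≠ 0 := norm_ne_zero_iff.mp (hω ▸ one_ne_zero)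
  rw [ofReal_symmetrizedEval hdeg hp hω, inv_pow, mul_inv_cancel_left₀ (pow_ne_zero d hω0)]

theorem symmetrizedEval_ne_zero (hdeg : p.natDegree ≤ 2 * d) (hp : p.reflect (2 * d) = p)
    (hroots : ∀ z : ℂ, (p.map (algebraMap ℝ ℂ)).IsRoot z → ∃ x : ℝ, 0 < x ∧ z = x)
    {ω : ℂ} (hω : ω ∈ Metric.sphere (0 : ℂ) 1 \ {1}) : symmetrizedEval p d ω ≠ 0 := by
  obtain ⟨hω, hω1⟩ := hω
  rw [mem_sphere_zero_iff_norm] at hω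
  intro h0
  refine hω1 (eq_one_of_isRoot_of_norm_eq_one hroots hω ?_)
  simp [IsRoot, eval_map_algebraMap, aeval_eq_pow_mul_symmetrizedEval hdeg hp hω, h0]

variable (p d) in
theorem continuousOn_symmetrizedEval : ContinuousOn (symmetrizedEval p d) (Metric.sphere 0 1) := by
  have hsub : Metric.sphere (0 : ℂ) 1 ⊆ {0}ᶜ := fun ω hω h0 => by simp_all
  refine ContinuousOn.mono ?_ hsub
  unfold symmetrizedEval
  fun_prop (disch := simp)

end Symmetrized

theorem stmt_12_general (d : ℕ) (p : Polynomial ℝ)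
    (hdeg : p.natDegree = 2 * d)
    (hpal : ∀ k ≤ 2 * d, p.coeff k = p.coeff (2 * d - k))
    (hroots : ∀ z : ℂ, (p.map (algebraMap ℝ ℂ)).IsRoot z → ∃ x : ℝ, 0 < x ∧ z = (x : ℂ)) :
    (∀ r : ℝ, p.IsRoot r → p.IsRoot r⁻¹) ∧
      (∃ σ : ℝ, (σ = 1 ∨ σ = -1) ∧
        ∀ ω : ℂ, ‖ω‖ = 1 → ω ≠ 1 → ω ≠ -1 →
          ∃ x : ℝ, x ≠ 0 ∧ Real.sign x = σ ∧
            (p.map (algebraMap ℝ ℂ)).eval ω = ω ^ d * (x : ℂ)) ∧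
      (∀ ω : ℂ, ‖ω‖ = 1 → ω ≠ 1 → ω ≠ -1 →
        (p.map (algebraMap ℝ ℂ)).eval ω ≠ 0) ∧
      (p.eval 1 ≠ 0 → p.eval (-1) ≠ 0 →
        ∀ ω : ℂ, ‖ω‖ = 1 → (p.map (algebraMap ℝ ℂ)).eval ω ≠ 0) := by
  have hp : p.reflect (2 * d) = p := reflect_eq_self_of_coeff_eq hpal
  have hne := fun ω (hω : ω ∈ Metric.sphere (0 : ℂ) 1 \ {1}) =>
    symmetrizedEval_ne_zero hdeg.le hp hroots hω
  have hcircle : ∀ ω : ℂ, ‖ω‖ = 1 → (p.map (algebraMap ℝ ℂ)).IsRoot ω → ω = 1 :=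
    fun ω hω => Complex.eq_one_of_isRoot_of_norm_eq_one hroots hω
  have hneg_one : (-1 : ℂ) ∈ Metric.sphere (0 : ℂ) 1 \ {1} := ⟨by simp, by norm_num⟩
  refine ⟨fun r hr => hr.inv_of_reflect_eq_self hdeg.le hp,
    ⟨Real.sign (symmetrizedEval p d (-1)),
      (Real.sign_apply_eq_of_ne_zero _ (hne (-1) hneg_one)).symm, fun ω hω hω1 _ => ?_⟩,
    fun ω hω hω1 _ h0 => hω1 (hcircle ω hω h0), fun h1 _ ω hω h0 => h1 ?_⟩
  · have hω' : ω ∈ Metric.sphere (0 : ℂ) 1 \ {1} := ⟨mem_sphere_zero_iff_norm.mpr hω, hω1⟩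
    refine ⟨_, hne ω hω', Real.sign_eq_sign_of_isPreconnected
      Complex.isPreconnected_sphere_diff_one
      ((continuousOn_symmetrizedEval p d).mono Set.sdiff_subset) hne hω' hneg_one, ?_⟩
    rw [eval_map_algebraMap, aeval_eq_pow_mul_symmetrizedEval hdeg.le hp hω]
  · rw [hcircle ω hω h0, eval_one_map] at h0
    exact (map_eq_zero _).mp h0

/-- If a real polynomial `p` of even degree `2d` is palindromic and all its (complex)
roots are real and positive, then its roots come in pairs `r, 1/r`; for every `ω` on the
unit circle with `ω ≠ ±1` the value `ω⁻ᵈ p(ω)` is a nonzero real number of constant sign;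
in particular `p` has no unit-circle roots other than possibly `±1`, and if moreover
`p(1) ≠ 0` and `p(-1) ≠ 0` then `p` has no roots on the unit circle at all. -/
theorem stmt_12 (d : ℕ) (hd : 0 < d) (p : Polynomial ℝ) (hp : p ≠ 0)
    (hdeg : p.natDegree = 2 * d)
    (hpal : ∀ k ≤ 2 * d, p.coeff k = p.coeff (2 * d - k))
    (hroots : ∀ z : ℂ, (p.map (algebraMap ℝ ℂ)).IsRoot z → ∃ x : ℝ, 0 < x ∧ z = (x : ℂ)) :
    (∀ r : ℝ, p.IsRoot r → p.IsRoot r⁻¹) ∧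
      (∃ σ : ℝ, (σ = 1 ∨ σ = -1) ∧
        ∀ ω : ℂ, ‖ω‖ = 1 → ω ≠ 1 → ω ≠ -1 →
          ∃ x : ℝ, x ≠ 0 ∧ Real.sign x = σ ∧
            (p.map (algebraMap ℝ ℂ)).eval ω = ω ^ d * (x : ℂ)) ∧
      (∀ ω : ℂ, ‖ω‖ = 1 → ω ≠ 1 → ω ≠ -1 →
        (p.map (algebraMap ℝ ℂ)).eval ω ≠ 0) ∧
      (p.eval 1 ≠ 0 → p.eval (-1) ≠ 0 →
        ∀ ω : ℂ, ‖ω‖ = 1 → (p.map (algebraMap ℝ ℂ)).eval ω ≠ 0) :=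
  stmt_12_general d p hdeg hpal hroots
end
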